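/- arXiv:2005.04381 — 5 statements merged into one kernel-verified Lean document; each statement's English description precedes it below -/
import Mathlib

section
/- Let Z be a set, ℓ : Z → ℝ and Δ : Z → ℝ≥0, and ψ : ℝ≥0 → ℝ≥0 Lipschitz with constant L_ψ and ψ(0) = 0, satisfying 0 ≤ ℓ(z) + ψ(Δ(z)) for all z ∈ Z. Then for any α > L_ψ and ε > 0, if ℓ(z) + α·Δ(z) ≤ ε then −(α/(α − L_ψ))·ε ≤ ℓ(z) ≤ ε. -/
theorem stmt_1 {Z : Type*} (ℓ : Z → ℝ) (Δ : Z → ℝ) (ψ : ℝ → ℝ) (Lψ : ℝ)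
    (hΔnn : ∀ z, 0 ≤ Δ z)
    (hψnn : ∀ a, 0 ≤ a → 0 ≤ ψ a)
    (hψ0 : ψ 0 = 0)
    (hψLip : ∀ a b, 0 ≤ a → 0 ≤ b → |ψ a - ψ b| ≤ Lψ * |a - b|)
    (hstat : ∀ z, 0 ≤ ℓ z + ψ (Δ z))
    (α : ℝ) (hα : Lψ < α) (ε : ℝ) (hε : 0 < ε)
    (z : Z) (hz : ℓ z + α * Δ z ≤ ε) :
    -((α / (α - Lψ)) * ε) ≤ ℓ z ∧ ℓ z ≤ ε := by
  have hL0 : 0 ≤ Lψ := by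
    have := hψLip 1 0 zero_le_one le_rfl
    have h1 := hψnn 1 zero_le_one
    rw [hψ0] at this
    simp [abs_of_nonneg h1] at this
    linarith
  have hΔ := hΔnn z
  have hlip := hψLip (Δ z) 0 hΔ le_rfl
  rw [hψ0, sub_zero, sub_zero, abs_of_nonneg hΔ, abs_of_nonneg (hψnn _ hΔ)] at hlip
  have hst := hstat z
  have hsub : 0 < α - Lψ := by linarith
  constructor
  · rw [div_mul_eq_mul_div, neg_le, le_div_iff₀ hsub]
    nlinarith
  · nlinarith
end

section
/- Let Z be a compact metric space, ℓ : Z → ℝ and Δ : Z → ℝ≥0 continuous, ψ : ℝ≥0 → ℝ≥0 Lipschitz with constant L_ψ and ψ(0)=0 such that 0 ≤ ℓ(z) + ψ(Δ(z)) for all z, and assume the set Z_s = {z : ℓ(z) = 0 ∧ Δ(z) = 0} is nonempty. Fix α > L_ψ. Then there exists a function φ_s : ℝ≥0 → ℝ≥0 with φ_s continuous at 0 and φ_s(0) = 0 such that for all sufficiently small ε > 0 and all z ∈ Z: if ℓ(z) + α·Δ(z) ≤ ε then dist(z, Z_s) ≤ φ_s(ε). -/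
/-!
Put `f := ℓ + α Δ`. Since `ψ(Δ) ≤ L_ψ Δ`, stationarity gives `(α - L_ψ) Δ ≤ f`, so `f ≤ 0` exactly on
`Z_s`. On a compact space, for any continuous `f` the worst distance to `{f ≤ 0}` over the sublevel
set `{f ≤ ε}` tends to `0` with `ε`: on the compact set where that distance is at least `δ`, the
function `f` is positive, hence bounded below by some `η > 0`.
-/

open Metric Set Filter Topology

section ErrorBound

variable {Z : Type*} [MetricSpace Z]

noncomputable def errorBoundModulus (f : Z → ℝ) (ε : ℝ) : ℝ :=
  ⨆ z : {z // f z ≤ ε}, infDist (z : Z) {z | f z ≤ 0}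

theorem errorBoundModulus_nonneg (f : Z → ℝ) (ε : ℝ) : 0 ≤ errorBoundModulus f ε :=
  Real.iSup_nonneg fun _ => infDist_nonneg

theorem errorBoundModulus_le {f : Z → ℝ} {ε δ : ℝ} (hδ : 0 ≤ δ)
    (h : ∀ z, f z ≤ ε → infDist z {z | f z ≤ 0} ≤ δ) : errorBoundModulus f ε ≤ δ :=
  Real.iSup_le (fun z => h z z.2) hδ

theorem errorBoundModulus_of_nonpos {f : Z → ℝ} {ε : ℝ} (hε : ε ≤ 0) :
    errorBoundModulus f ε = 0 :=
  le_antisymm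
    (errorBoundModulus_le le_rfl fun z hz =>
      (infDist_zero_of_mem (s := {z | f z ≤ 0}) (x := z) (hz.trans hε)).le)
    (errorBoundModulus_nonneg f ε)

variable [CompactSpace Z]

theorem infDist_le_errorBoundModulus {f : Z → ℝ} {ε : ℝ} {z : Z} (hz : f z ≤ ε) :
    infDist z {z | f z ≤ 0} ≤ errorBoundModulus f ε := by
  have hbdd : BddAbove (range fun z : Z => infDist z {z | f z ≤ 0}) :=
    (isCompact_range (continuous_infDist_pt _)).bddAbove
  exact le_ciSup (f := fun z : {z // f z ≤ ε} => infDist (z : Z) {z | f z ≤ 0})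
    (hbdd.mono <| range_subset_iff.2 fun w => mem_range_self (w : Z)) ⟨z, hz⟩

theorem exists_pos_forall_infDist_lt {f : Z → ℝ} (hf : Continuous f) {δ : ℝ} (hδ : 0 < δ) :
    ∃ η > 0, ∀ z, f z < η → infDist z {z | f z ≤ 0} < δ := by
  set K := {z | δ ≤ infDist z {z | f z ≤ 0}}
  have hK : IsCompact K := (isClosed_le continuous_const (continuous_infDist_pt _)).isCompact
  have hfK : ∀ z ∈ K, 0 < f z := fun z hz => by
    by_contra! hz0
    have : infDist z {z | f z ≤ 0} = 0 := infDist_zero_of_mem hz0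
    exact hδ.not_ge (this ▸ hz)
  obtain ⟨η, hη, hηK⟩ := hK.exists_forall_le' hf.continuousOn hfK
  exact ⟨η, hη, fun z hz => not_le.1 fun hzK => hz.not_ge (hηK z hzK)⟩

theorem continuousAt_errorBoundModulus_zero {f : Z → ℝ} (hf : Continuous f) :
    ContinuousAt (errorBoundModulus f) 0 := by
  rw [ContinuousAt, errorBoundModulus_of_nonpos le_rfl, Metric.tendsto_nhds]
  intro δ hδ
  obtain ⟨η, hη, hdist⟩ := exists_pos_forall_infDist_lt hf (half_pos hδ)
  filter_upwards [Iio_mem_nhds hη] with ε hε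
  have hle : errorBoundModulus f ε ≤ δ / 2 :=
    errorBoundModulus_le (half_pos hδ).le fun z hz => (hdist z (hz.trans_lt hε)).le
  rw [Real.dist_0_eq_abs, abs_of_nonneg (errorBoundModulus_nonneg f ε)]
  linarith

end ErrorBound

theorem add_mul_nonpos_iff {l d L α : ℝ} (hd : 0 ≤ d) (hstat : 0 ≤ l + L * d) (hα : L < α) :
    l + α * d ≤ 0 ↔ l = 0 ∧ d = 0 := by
  constructor
  · intro h
    have hd0 : d = 0 := by nlinarith
    subst hd0
    constructor <;> linarith
  · rintro ⟨rfl, rfl⟩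
    simp

theorem stmt_3_general {Z : Type*} [MetricSpace Z] [CompactSpace Z]
    (ℓ : Z → ℝ) (Δ : Z → ℝ) (ψ : ℝ → ℝ) (Lψ : ℝ)
    (hℓ : Continuous ℓ) (hΔ : Continuous Δ) (hΔnn : ∀ z, 0 ≤ Δ z)
    (hψ0 : ψ 0 = 0)
    (hψLip : ∀ a b, 0 ≤ a → 0 ≤ b → |ψ a - ψ b| ≤ Lψ * |a - b|)
    (hstat : ∀ z, 0 ≤ ℓ z + ψ (Δ z))
    (α : ℝ) (hα : Lψ < α) :
    ∃ φs : ℝ → ℝ, ContinuousAt φs 0 ∧ φs 0 = 0 ∧ (∀ x, 0 ≤ x → 0 ≤ φs x) ∧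
      ∃ ε₀ : ℝ, 0 < ε₀ ∧ ∀ ε : ℝ, 0 < ε → ε ≤ ε₀ → ∀ z : Z,
        ℓ z + α * Δ z ≤ ε →
          Metric.infDist z {z : Z | ℓ z = 0 ∧ Δ z = 0} ≤ φs ε := by
  have hψle : ∀ z, ψ (Δ z) ≤ Lψ * Δ z := fun z => by
    have h := hψLip (Δ z) 0 (hΔnn z) le_rfl
    rw [hψ0, sub_zero, sub_zero, abs_of_nonneg (hΔnn z)] at h
    exact (le_abs_self _).trans h
  have hZs : {z | ℓ z = 0 ∧ Δ z = 0} = {z | ℓ z + α * Δ z ≤ 0} := by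
    ext z
    exact (add_mul_nonpos_iff (hΔnn z) ((hstat z).trans (by linarith [hψle z])) hα).symm
  refine ⟨errorBoundModulus fun z => ℓ z + α * Δ z,
    continuousAt_errorBoundModulus_zero (hℓ.add (continuous_const.mul hΔ)),
    errorBoundModulus_of_nonpos le_rfl, fun _ _ => errorBoundModulus_nonneg _ _,
    1, one_pos, fun ε _ _ z hz => ?_⟩
  rw [hZs]
  exact infDist_le_errorBoundModulus hz

theorem stmt_3 {Z : Type*} [MetricSpace Z] [CompactSpace Z]
    (ℓ : Z → ℝ) (Δ : Z → ℝ) (ψ : ℝ → ℝ) (Lψ : ℝ)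
    (hℓ : Continuous ℓ) (hΔ : Continuous Δ) (hΔnn : ∀ z, 0 ≤ Δ z)
    (hψnn : ∀ a, 0 ≤ a → 0 ≤ ψ a)
    (hψ0 : ψ 0 = 0)
    (hψLip : ∀ a b, 0 ≤ a → 0 ≤ b → |ψ a - ψ b| ≤ Lψ * |a - b|)
    (hstat : ∀ z, 0 ≤ ℓ z + ψ (Δ z))
    (hne : ({z : Z | ℓ z = 0 ∧ Δ z = 0}).Nonempty)
    (α : ℝ) (hα : Lψ < α) :
    ∃ φs : ℝ → ℝ, ContinuousAt φs 0 ∧ φs 0 = 0 ∧ (∀ x, 0 ≤ x → 0 ≤ φs x) ∧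
      ∃ ε₀ : ℝ, 0 < ε₀ ∧ ∀ ε : ℝ, 0 < ε → ε ≤ ε₀ → ∀ z : Z,
        ℓ z + α * Δ z ≤ ε →
          Metric.infDist z {z : Z | ℓ z = 0 ∧ Δ z = 0} ≤ φs ε :=
  stmt_3_general ℓ Δ ψ Lψ hℓ hΔ hΔnn hψ0 hψLip hstat α hα
end

section
/- Let U be a nonempty set, γ > 0, and V, Ψ : U → ℝ with Ψ(u) = ℓ_N(u) + α·Δ_N(u) where Δ_N(u) ≥ 0 for all u, α > L_ψ > 0, and suppose ℓ_N(u) ≥ −L_ψ·Δ_N(u) for all u ∈ U. Suppose u* minimizes γ·Ψ(u) + V(u) over U, and there exists u# ∈ U with Ψ(u#) = 0 and V(u#) − V(u*) ≤ K₀ for some K₀ ≥ 0. Then Δ_N(u*) ≤ K₀/((α − L_ψ)·γ) and |ℓ_N(u*)| ≤ (K₀/γ)·max{1, α/(α − L_ψ)}. -/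
theorem stmt_8 {U : Type*} [Nonempty U]
    (ℓN ΔN V : U → ℝ) (Ψ : U → ℝ) (α Lψ γ K₀ : ℝ)
    (hγ : 0 < γ) (hLψ : 0 < Lψ) (hα : Lψ < α) (hK₀ : 0 ≤ K₀)
    (hΨ : ∀ u, Ψ u = ℓN u + α * ΔN u)
    (hΔnn : ∀ u, 0 ≤ ΔN u)
    (hstat : ∀ u, -(Lψ * ΔN u) ≤ ℓN u)
    (ustar : U) (hmin : ∀ u : U, γ * Ψ ustar + V ustar ≤ γ * Ψ u + V u)
    (usharp : U) (hsharp : Ψ usharp = 0)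
    (hKbound : V usharp - V ustar ≤ K₀) :
    ΔN ustar ≤ K₀ / ((α - Lψ) * γ) ∧
      |ℓN ustar| ≤ (K₀ / γ) * max 1 (α / (α - Lψ)) := by
  have ha : 0 < α - Lψ := by linarith
  have h1 : γ * Ψ ustar ≤ K₀ := by
    have := hmin usharp
    rw [hsharp] at this
    linarith
  have hΨe := hΨ ustar
  have hst := hstat ustar
  have hΔ := hΔnn ustar
  have hΨlb : (α - Lψ) * ΔN ustar ≤ Ψ ustar := by nlinarith
  have hΔb : ΔN ustar ≤ K₀ / ((α - Lψ) * γ) := by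
    rw [le_div_iff₀ (by positivity)]
    nlinarith
  refine ⟨hΔb, abs_le.mpr ⟨?_, ?_⟩⟩
  · have hm : α / (α - Lψ) ≤ max 1 (α / (α - Lψ)) := le_max_right _ _
    have hnn : 0 ≤ K₀ / γ := by positivity
    have key : -(ℓN ustar) ≤ (K₀ / γ) * (α / (α - Lψ)) := by
      have h2 : Lψ * ΔN ustar ≤ Lψ * (K₀ / ((α - Lψ) * γ)) :=
        mul_le_mul_of_nonneg_left hΔb hLψ.le
      have h3 : Lψ * (K₀ / ((α - Lψ) * γ)) ≤ (K₀ / γ) * (α / (α - Lψ)) := by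
        rw [div_mul_eq_mul_div, mul_div_assoc, div_div, mul_div_assoc', mul_div_assoc',
          div_le_div_iff₀ (by positivity) (by positivity)]
        nlinarith [mul_nonneg hK₀ (mul_pos (mul_pos ha ha) hγ).le]
      linarith
    nlinarith [mul_le_mul_of_nonneg_left hm hnn]
  · have hm : (1:ℝ) ≤ max 1 (α / (α - Lψ)) := le_max_left _ _
    have hnn : 0 ≤ K₀ / γ := by positivity
    have h2 : ℓN ustar ≤ K₀ / γ := by
      rw [le_div_iff₀ hγ]
      nlinarith [mul_nonneg hγ.le (mul_nonneg (by linarith : (0:ℝ) ≤ α) hΔ)]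
    nlinarith [mul_le_mul_of_nonneg_left hm hnn]
end

section
/- Under the hypotheses of the previous statement (u* minimizes γ·Ψ + V over U, Ψ(u#) = 0, Ψ(u) = ℓ_N(u) + αΔ_N(u) with Δ_N ≥ 0 and ℓ_N(u) ≥ −L_ψΔ_N(u), α > L_ψ, γ > 0, and V(u#) − V(u*) ≤ K₀), one has V(u*) ≤ V(u#) + γ·L_ψ·Δ_N(u*) and consequently V(u*) ≤ V(u#) + K₀·L_ψ/(α − L_ψ). -/
theorem stmt_9 {U : Type*} [Nonempty U]
    (ℓN ΔN V : U → ℝ) (Ψ : U → ℝ) (α Lψ γ K₀ : ℝ)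
    (hγ : 0 < γ) (hLψ : 0 < Lψ) (hα : Lψ < α) (hK₀ : 0 ≤ K₀)
    (hΨ : ∀ u, Ψ u = ℓN u + α * ΔN u)
    (hΔnn : ∀ u, 0 ≤ ΔN u)
    (hstat : ∀ u, -(Lψ * ΔN u) ≤ ℓN u)
    (ustar : U) (hmin : ∀ u : U, γ * Ψ ustar + V ustar ≤ γ * Ψ u + V u)
    (usharp : U) (hsharp : Ψ usharp = 0)
    (hKbound : V usharp - V ustar ≤ K₀) :
    V ustar ≤ V usharp + γ * Lψ * ΔN ustar ∧
      V ustar ≤ V usharp + K₀ * Lψ / (α - Lψ) := by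
  have h1 := hmin usharp
  rw [hsharp] at h1
  have h2 := hΨ ustar
  have h3 : γ * (-(Lψ * ΔN ustar)) ≤ γ * ℓN ustar :=
    mul_le_mul_of_nonneg_left (hstat ustar) hγ.le
  have h4 := hΔnn ustar
  have hd : 0 < α - Lψ := by linarith
  -- γ * (α - Lψ) * ΔN ustar ≤ γ * Ψ ustar
  have h5 : γ * (α - Lψ) * ΔN ustar ≤ γ * Ψ ustar := by
    rw [h2]; ring_nf; nlinarith
  have h6 : 0 ≤ γ * (α - Lψ) * ΔN ustar := by positivity
  have hfirst : V ustar ≤ V usharp + γ * Lψ * ΔN ustar := by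
    nlinarith [mul_pos hγ hLψ, mul_nonneg (mul_pos hγ hLψ).le h4]
  refine ⟨hfirst, ?_⟩
  have hΔb : γ * (α - Lψ) * ΔN ustar ≤ K₀ := by nlinarith
  have h7 : γ * Lψ * ΔN ustar ≤ K₀ * Lψ / (α - Lψ) := by
    rw [le_div_iff₀ hd]
    nlinarith [mul_le_mul_of_nonneg_left hΔb hLψ.le]
  linarith
end

section
/- Let ℓ : Z → ℝ be continuous on a metric space Z, with Lipschitz constant L_ℓ on a subset containing the relevant points, let Δ : Z → ℝ≥0, α > L_ψ > 0, and suppose ℓ(z) ≥ −L_ψ·Δ(z) for all z. Suppose z satisfies ℓ(z) + α·Δ(z) ≤ 2c and z' satisfies dist(z', z) ≤ τ·Δ(z)·M for some M ≥ 0 with τ·M ≤ 1. Then |ℓ(z')| ≤ 2(max{1, α/(α−L_ψ)} + L_ℓ/(α−L_ψ))·c. -/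
theorem stmt_14 {Z : Type*} [MetricSpace Z]
    (ℓ Δ : Z → ℝ) (Lℓ Lψ α τ M c : ℝ)
    (hℓcont : Continuous ℓ)
    (hLℓ : 0 ≤ Lℓ)
    (hℓLip : ∀ a b : Z, |ℓ a - ℓ b| ≤ Lℓ * dist a b)
    (hΔnn : ∀ z, 0 ≤ Δ z)
    (hLψ : 0 < Lψ) (hα : Lψ < α)
    (hstat : ∀ z, -(Lψ * Δ z) ≤ ℓ z)
    (hM : 0 ≤ M) (hτM : τ * M ≤ 1)
    (z z' : Z)
    (hz : ℓ z + α * Δ z ≤ 2 * c)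
    (hz' : dist z' z ≤ τ * Δ z * M) :
    |ℓ z'| ≤ 2 * (max 1 (α / (α - Lψ)) + Lℓ / (α - Lψ)) * c := by
  have hβ : 0 < α - Lψ := by linarith
  have hΔz : 0 ≤ Δ z := hΔnn z
  have hstz := hstat z
  have hΔle : (α - Lψ) * Δ z ≤ 2 * c := by linarith
  have hc : 0 ≤ c := by nlinarith
  have hΔc : Δ z ≤ 2 * c / (α - Lψ) := by
    rw [le_div_iff₀ hβ]; nlinarith
  have hdist : dist z' z ≤ Δ z := by
    calc dist z' z ≤ τ * Δ z * M := hz'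
      _ = (τ * M) * Δ z := by ring
      _ ≤ 1 * Δ z := mul_le_mul_of_nonneg_right hτM hΔz
      _ = Δ z := one_mul _
  have hlip := hℓLip z' z
  have habs := abs_sub_abs_le_abs_sub (ℓ z') (ℓ z)
  have h2 : Lℓ * dist z' z ≤ Lℓ * Δ z := mul_le_mul_of_nonneg_left hdist hLℓ
  have h1 : |ℓ z'| ≤ |ℓ z| + Lℓ * Δ z := by linarith
  set m := max 1 (α / (α - Lψ)) with hm
  have hmax1 : (1:ℝ) ≤ m := le_max_left _ _
  have hmax2 : α / (α - Lψ) ≤ m := le_max_right _ _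
  have hαdiv : Lψ * Δ z ≤ α / (α - Lψ) * (2 * c) := by
    rw [div_mul_eq_mul_div, le_div_iff₀ hβ]
    nlinarith
  have hℓzabs : |ℓ z| ≤ m * (2 * c) := by
    rcases abs_cases (ℓ z) with ⟨h, _⟩ | ⟨h, _⟩ <;> rw [h] <;> nlinarith
  have hLΔ : Lℓ * Δ z ≤ Lℓ / (α - Lψ) * (2 * c) := by
    rw [div_mul_eq_mul_div, le_div_iff₀ hβ]
    nlinarith
  calc |ℓ z'| ≤ m * (2 * c) + Lℓ / (α - Lψ) * (2 * c) := by linarith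
    _ = 2 * (m + Lℓ / (α - Lψ)) * c := by ring
end
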